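/- arXiv:math-ph/0303007 — 2 statements merged into one kernel-verified Lean document; each statement's English description precedes it below -/
import Mathlib

section
/- Let ξ ∈ ℝ³ with ξ ≠ 0 and let x ∈ ℝ³ be such that x ≠ −tξ for every t ≥ 0. Then the function t ↦ ⟨A(x + tξ), ξ⟩ is integrable on [0,∞), and the outgoing phase Φ₊(x,ξ) := −∫₀^∞ ⟨A(x + tξ), ξ⟩ dt satisfies Φ₊(x,ξ) = ∫_{φ_ξ}^{φ_x} a(φ) dφ, where φ_ξ = arccos(ξ₃/|ξ|). -/
open Real MeasureTheory Filter
open scoped RealInnerProductSpace Topology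

noncomputable section

/-- `ℝ³` as a Euclidean space. -/
abbrev E3 := EuclideanSpace ℝ (Fin 3)

/-- The colatitude `φ_x = arccos(x₃/|x|)` of a point of `ℝ³`. -/
def colat (x : E3) : ℝ := Real.arccos (x 2 / ‖x‖)

/-- The unit vector `e_{φ_x}` of spherical coordinates. -/
def ephi (x : E3) : E3 :=
  (1 / ‖x‖) • (WithLp.equiv 2 (Fin 3 → ℝ)).symm
    ![x 0 * x 2 / Real.sqrt ((x 0)^2 + (x 1)^2),
      x 1 * x 2 / Real.sqrt ((x 0)^2 + (x 1)^2),
      - Real.sqrt ((x 0)^2 + (x 1)^2)]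

/-- The magnetic potential `A(x) = (a(φ_x)/|x|) e_{φ_x}` (set to `0` on the `x₃`-axis). -/
def magA (a : ℝ → ℝ) (x : E3) : E3 :=
  if 0 < (x 0)^2 + (x 1)^2 then (a (colat x) / ‖x‖) • ephi x else 0

/-!
The potential `ψ(y) = ∫₀^{φ_y} a` satisfies `∇ψ = A` on `ℝ³ ∖ {0}`: off the `x₃`-axis because
`∇φ = e_φ / |y|`, and near the axis because `φ` is close to `0` or `π` there, where `a` vanishes,
so that `ψ` is locally constant. Hence `⟨A(x + tξ), ξ⟩ = d/dt ψ(x + tξ)`, and the integral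
telescopes to `lim ψ(x + tξ) - ψ(x) = ψ(ξ) - ψ(x)`, the colatitude being invariant under positive
scaling.

Integrability: for large `t` the integrand has the sign of `⟨x + tξ, x₃ξ - ξ₃x⟩`, an affine
function of `t`, and a derivative of constant sign with a limit at infinity is integrable.
-/

lemma intervalIntegral_eventuallyEq_const_of_eventuallyEq_zero {a : ℝ → ℝ} (ha : Continuous a)
    (b : ℝ) {c : ℝ} (h : a =ᶠ[𝓝 c] 0) :
    (fun s => ∫ u in b..s, a u) =ᶠ[𝓝 c] fun _ => ∫ u in b..c, a u := by
  obtain ⟨ε, hε, hzero⟩ := Metric.eventually_nhds_iff_ball.1 h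
  filter_upwards [Metric.ball_mem_nhds c hε] with s hs
  rw [← intervalIntegral.integral_add_adjacent_intervals (ha.intervalIntegrable b c)
    (ha.intervalIntegrable c s), add_eq_left, intervalIntegral.integral_congr
    (g := 0) fun u hu => hzero u ((convex_ball c ε).ordConnected.uIcc_subset
      (Metric.mem_ball_self hε) hs hu)]
  exact intervalIntegral.integral_zero

lemma eventually_nonneg_or_nonpos_add_mul (α β : ℝ) :
    (∀ᶠ t in atTop, 0 ≤ α + t * β) ∨ ∀ᶠ t in atTop, α + t * β ≤ 0 := by
  rcases lt_trichotomy β 0 with hβ | rfl | hβ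
  · refine Or.inr ((eventually_ge_atTop (-α / β)).mono fun t ht => ?_)
    linarith [(div_le_iff_of_neg hβ).1 ht]
  · rcases le_total 0 α with h | h
    exacts [Or.inl (.of_forall fun t => by simpa using h),
      Or.inr (.of_forall fun t => by simpa using h)]
  · refine Or.inl ((eventually_ge_atTop (-α / β)).mono fun t ht => ?_)
    linarith [(div_le_iff₀ hβ).1 ht]

lemma integrableOn_Ici_deriv_of_eventually_nonneg_or_nonpos {f g : ℝ → ℝ} {a l : ℝ}
    (hcont : ContinuousOn f (Set.Ici a)) (hderiv : ∀ t ∈ Set.Ici a, HasDerivAt g (f t) t)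
    (hsign : (∀ᶠ t in atTop, 0 ≤ f t) ∨ ∀ᶠ t in atTop, f t ≤ 0)
    (hlim : Tendsto g atTop (𝓝 l)) : IntegrableOn f (Set.Ici a) := by
  have htail : ∃ b, a ≤ b ∧ IntegrableOn f (Set.Ioi b) := by
    rcases hsign with h | h <;> obtain ⟨T, hT⟩ := eventually_atTop.1 h <;>
      refine ⟨max a T, le_max_left a T, ?_⟩
    · exact integrableOn_Ioi_deriv_of_nonneg' (fun t ht => hderiv t ((le_max_left a T).trans ht))
        (fun t ht => hT t ((le_max_right a T).trans ht.le)) hlim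
    · exact integrableOn_Ioi_deriv_of_nonpos' (fun t ht => hderiv t ((le_max_left a T).trans ht))
        (fun t ht => hT t ((le_max_right a T).trans ht.le)) hlim
  obtain ⟨b, hab, hb⟩ := htail
  rw [← Set.Icc_union_Ioi_eq_Ici hab]
  exact (hcont.mono Set.Icc_subset_Ici_self).integrableOn_Icc.union hb

namespace E3

lemma norm_sq_eq (y : E3) : ‖y‖ ^ 2 = y 0 ^ 2 + y 1 ^ 2 + y 2 ^ 2 := by
  simp [EuclideanSpace.norm_sq_eq, Fin.sum_univ_three]

lemma inner_eq (y v : E3) : ⟪y, v⟫ = y 0 * v 0 + y 1 * v 1 + y 2 * v 2 := by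
  simp [PiLp.inner_apply, Fin.sum_univ_three, mul_comm]

lemma norm_ne_zero_of_off_axis {y : E3} (hax : 0 < y 0 ^ 2 + y 1 ^ 2) : ‖y‖ ≠ 0 := fun h => by
  nlinarith [norm_sq_eq y, sq_nonneg (y 2)]

end E3

lemma colat_smul (y : E3) {c : ℝ} (hc : 0 < c) : colat (c • y) = colat y := by
  rw [colat, colat, norm_smul, Real.norm_of_nonneg hc.le, PiLp.smul_apply, smul_eq_mul,
    mul_div_mul_left _ _ hc.ne']

lemma continuousAt_colat {y : E3} (hy : y ≠ 0) : ContinuousAt colat y :=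
  Real.continuous_arccos.continuousAt.comp <|
    (PiLp.continuous_apply 2 _ 2).continuousAt.div continuous_norm.continuousAt
      (norm_ne_zero_iff.2 hy)

lemma colat_eq_zero_or_pi_of_on_axis {y : E3} (hy : y ≠ 0) (hax : y 0 ^ 2 + y 1 ^ 2 = 0) :
    colat y = 0 ∨ colat y = π := by
  have hnorm : ‖y‖ = |y 2| := by
    rw [← Real.sqrt_sq (norm_nonneg y), E3.norm_sq_eq, hax, zero_add, Real.sqrt_sq_eq_abs]
  have h2 : y 2 ≠ 0 := fun h => hy (norm_eq_zero.1 (by rw [hnorm, h, abs_zero]))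
  rcases h2.lt_or_gt with h | h
  · right; rw [colat, hnorm, abs_of_neg h, div_neg, div_self h.ne, Real.arccos_neg_one]
  · left; rw [colat, hnorm, abs_of_pos h, div_self h.ne', Real.arccos_one]

lemma tendsto_colat_add_smul (x : E3) {ξ : E3} (hξ : ξ ≠ 0) :
    Tendsto (fun t : ℝ => colat (x + t • ξ)) atTop (𝓝 (colat ξ)) := by
  have hdir : Tendsto (fun t : ℝ => t⁻¹ • x + ξ) atTop (𝓝 ξ) := by
    simpa using ((tendsto_inv_atTop_zero (𝕜 := ℝ)).smul_const x).add_const ξ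
  refine ((continuousAt_colat hξ).tendsto.comp hdir).congr' ?_
  filter_upwards [eventually_gt_atTop 0] with t ht
  rw [Function.comp_apply, ← colat_smul _ ht, smul_add, smul_inv_smul₀ ht.ne', add_comm]

lemma ephi_eq_zero_of_on_axis {y : E3} (hax : y 0 ^ 2 + y 1 ^ 2 = 0) : ephi y = 0 := by
  ext i; fin_cases i <;> simp [ephi, hax]

lemma inner_ephi (y v : E3) :
    ⟪ephi y, v⟫ = ⟪y, y 2 • v - v 2 • y⟫ / (‖y‖ * √(y 0 ^ 2 + y 1 ^ 2)) := by
  rcases (add_nonneg (sq_nonneg (y 0)) (sq_nonneg (y 1))).eq_or_lt' with hax | hax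
  · simp [ephi_eq_zero_of_on_axis hax, hax]
  have hρ2 := Real.sq_sqrt hax.le
  rw [inner_sub_right, inner_smul_right, inner_smul_right, real_inner_self_eq_norm_sq,
    E3.norm_sq_eq, E3.inner_eq, E3.inner_eq]
  simp only [ephi, one_div, PiLp.smul_apply, smul_eq_mul, WithLp.equiv_symm_apply,
    Matrix.cons_val_zero, Matrix.cons_val_one, Matrix.cons_val_two,
    Matrix.head_cons, Matrix.tail_cons]
  have hy := E3.norm_ne_zero_of_off_axis hax
  field_simp
  linear_combination (-v 2) * hρ2

lemma hasDerivAt_colat_comp {γ : ℝ → E3} {v : E3} {t : ℝ} (hγ : HasDerivAt γ v t)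
    (hax : 0 < γ t 0 ^ 2 + γ t 1 ^ 2) :
    HasDerivAt (fun s => colat (γ s)) (⟪ephi (γ t), v⟫ / ‖γ t‖) t := by
  set y := γ t
  have hy := E3.norm_ne_zero_of_off_axis hax
  have hnorm : HasDerivAt (fun s => ‖γ s‖) (⟪y, v⟫ / ‖y‖) t := by
    have h := hγ.norm_sq.sqrt (pow_ne_zero 2 hy)
    rw [Real.sqrt_sq (norm_nonneg _), mul_div_mul_left _ _ two_ne_zero] at h
    simpa only [Real.sqrt_sq (norm_nonneg _)] using h
  have hcoord : HasDerivAt (fun s => γ s 2) (v 2) t :=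
    (EuclideanSpace.proj (2 : Fin 3) (𝕜 := ℝ)).hasFDerivAt.comp_hasDerivAt t hγ
  have hcos : HasDerivAt (fun s => γ s 2 / ‖γ s‖)
      ((v 2 * ‖y‖ - y 2 * (⟪y, v⟫ / ‖y‖)) / ‖y‖ ^ 2) t := hcoord.div hnorm hy
  have hsin_sq : 1 - (y 2 / ‖y‖) ^ 2 = (y 0 ^ 2 + y 1 ^ 2) / ‖y‖ ^ 2 := by
    field_simp
    linarith [E3.norm_sq_eq y]
  have hsin_pos : 0 < 1 - (y 2 / ‖y‖) ^ 2 := by rw [hsin_sq]; positivity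
  have hne_one : y 2 / ‖y‖ ≠ 1 := fun h => by norm_num [h] at hsin_pos
  have hne_neg_one : y 2 / ‖y‖ ≠ -1 := fun h => by norm_num [h] at hsin_pos
  refine ((Real.hasDerivAt_arccos hne_neg_one hne_one).comp t hcos).congr_deriv ?_
  rw [hsin_sq, Real.sqrt_div' _ (sq_nonneg _), Real.sqrt_sq (norm_nonneg y), inner_ephi,
    inner_sub_right, inner_smul_right, inner_smul_right, real_inner_self_eq_norm_sq]
  field_simp
  ring

lemma continuousAt_ephi {y : E3} (hax : 0 < y 0 ^ 2 + y 1 ^ 2) : ContinuousAt ephi y := by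
  have hy := E3.norm_ne_zero_of_off_axis hax
  have hρ : √(y 0 ^ 2 + y 1 ^ 2) ≠ 0 := (Real.sqrt_pos.2 hax).ne'
  unfold ephi
  simp only [WithLp.equiv_symm_apply]
  fun_prop (disch := assumption)

-- On the axis `ephi y = 0` (division by `0`), so the case split in `magA` is immaterial.
lemma magA_eq_smul_ephi (a : ℝ → ℝ) (y : E3) : magA a y = (a (colat y) / ‖y‖) • ephi y := by
  unfold magA
  split_ifs with hax
  · rfl
  · rw [ephi_eq_zero_of_on_axis (le_antisymm (not_lt.1 hax) (by positivity)), smul_zero]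

def magPotential (a : ℝ → ℝ) (y : E3) : ℝ := ∫ φ in (0)..colat y, a φ

section Potential

variable {a : ℝ → ℝ}

lemma eventuallyEq_zero_nhds_colat (hsupp : tsupport a ⊆ Set.Ioo 0 π) {y : E3} (hy : y ≠ 0)
    (hax : y 0 ^ 2 + y 1 ^ 2 = 0) : a =ᶠ[𝓝 (colat y)] 0 := by
  refine notMem_tsupport_iff_eventuallyEq.1 fun hmem => ?_
  have := hsupp hmem
  rcases colat_eq_zero_or_pi_of_on_axis hy hax with h | h <;> rw [h] at this
  exacts [this.1.false, this.2.false]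

lemma continuousAt_magA (ha : Continuous a) (hsupp : tsupport a ⊆ Set.Ioo 0 π) {y : E3}
    (hy : y ≠ 0) : ContinuousAt (magA a) y := by
  rw [funext (magA_eq_smul_ephi a)]
  rcases (add_nonneg (sq_nonneg (y 0)) (sq_nonneg (y 1))).eq_or_lt' with hax | hax
  · have hvanish := (continuousAt_colat hy).eventually (eventuallyEq_zero_nhds_colat hsupp hy hax)
    refine continuousAt_const.congr (f := fun _ => (0 : E3)) ?_
    filter_upwards [hvanish] with z hz
    simp [hz]
  · exact ((ha.continuousAt.comp (continuousAt_colat hy)).div continuous_norm.continuousAt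
      (norm_ne_zero_iff.2 hy)).smul (continuousAt_ephi hax)

lemma magPotential_eventuallyEq_of_on_axis (ha : Continuous a) (hsupp : tsupport a ⊆ Set.Ioo 0 π)
    {y : E3} (hy : y ≠ 0) (hax : y 0 ^ 2 + y 1 ^ 2 = 0) :
    magPotential a =ᶠ[𝓝 y] fun _ => magPotential a y :=
  (continuousAt_colat hy).eventually
    (intervalIntegral_eventuallyEq_const_of_eventuallyEq_zero ha 0
      (eventuallyEq_zero_nhds_colat hsupp hy hax))

lemma hasDerivAt_magPotential_comp (ha : Continuous a) (hsupp : tsupport a ⊆ Set.Ioo 0 π)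
    {γ : ℝ → E3} {v : E3} {t : ℝ} (hγ : HasDerivAt γ v t) (h0 : γ t ≠ 0) :
    HasDerivAt (fun s => magPotential a (γ s)) ⟪magA a (γ t), v⟫ t := by
  rcases (add_nonneg (sq_nonneg (γ t 0)) (sq_nonneg (γ t 1))).eq_or_lt' with hax | hax
  · rw [magA_eq_smul_ephi, ephi_eq_zero_of_on_axis hax, smul_zero, inner_zero_left]
    exact (hasDerivAt_const t _).congr_of_eventuallyEq
      (hγ.continuousAt.eventually (magPotential_eventuallyEq_of_on_axis ha hsupp h0 hax))
  · rw [magA_eq_smul_ephi, real_inner_smul_left, div_mul_eq_mul_div, mul_div_assoc]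
    exact (ha.integral_hasStrictDerivAt 0 _).hasDerivAt.comp t (hasDerivAt_colat_comp hγ hax)

lemma eventually_nonneg_or_nonpos_inner_magA_add_smul (hpos : ∀ s, 0 ≤ a s) (x ξ : E3) :
    (∀ᶠ t : ℝ in atTop, 0 ≤ ⟪magA a (x + t • ξ), ξ⟫) ∨
      ∀ᶠ t : ℝ in atTop, ⟪magA a (x + t • ξ), ξ⟫ ≤ 0 := by
  -- `y₂ ξ - ξ₂ y = e₃ × (ξ × y)` does not change along the line `y = x + t ξ`.
  set w := x 2 • ξ - ξ 2 • x
  have hsplit : ∀ t : ℝ, ∃ c ≥ 0, ⟪magA a (x + t • ξ), ξ⟫ = c * (⟪x, w⟫ + t * ⟪ξ, w⟫) := by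
    intro t
    have hw : (x + t • ξ) 2 • ξ - ξ 2 • (x + t • ξ) = w := by
      simp only [w, PiLp.add_apply, PiLp.smul_apply, smul_eq_mul]
      module
    refine ⟨a (colat (x + t • ξ)) / ‖x + t • ξ‖ /
        (‖x + t • ξ‖ * √((x + t • ξ) 0 ^ 2 + (x + t • ξ) 1 ^ 2)),
      div_nonneg (div_nonneg (hpos _) (norm_nonneg _)) (by positivity), ?_⟩
    rw [magA_eq_smul_ephi, real_inner_smul_left, inner_ephi, hw, inner_add_left,
      real_inner_smul_left]
    ring
  rcases eventually_nonneg_or_nonpos_add_mul ⟪x, w⟫ ⟪ξ, w⟫ with h | h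
  · refine Or.inl (h.mono fun t ht => ?_)
    obtain ⟨c, hc, hct⟩ := hsplit t
    exact hct ▸ mul_nonneg hc ht
  · refine Or.inr (h.mono fun t ht => ?_)
    obtain ⟨c, hc, hct⟩ := hsplit t
    exact hct ▸ mul_nonpos_of_nonneg_of_nonpos hc ht

end Potential

theorem outgoing_phase_eq_general (a : ℝ → ℝ) (ha : ContDiff ℝ (⊤ : ℕ∞) a)
    (hpos : ∀ t, 0 ≤ a t)
    (hsupp : tsupport a ⊆ Set.Ioo 0 Real.pi)
    (ξ x : E3) (hξ : ξ ≠ 0) (hx : ∀ t : ℝ, 0 ≤ t → x ≠ -(t • ξ)) :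
    IntegrableOn (fun t : ℝ => ⟪magA a (x + t • ξ), ξ⟫) (Set.Ici 0) ∧
    -(∫ t in Set.Ici (0:ℝ), ⟪magA a (x + t • ξ), ξ⟫) = ∫ φ in (colat ξ)..(colat x), a φ := by
  have hcont : Continuous a := ha.continuous
  have hline : ∀ t ∈ Set.Ici (0 : ℝ), x + t • ξ ≠ 0 := fun t ht h =>
    hx t ht (eq_neg_of_add_eq_zero_left h)
  have hderiv : ∀ t ∈ Set.Ici (0 : ℝ),
      HasDerivAt (fun s => magPotential a (x + s • ξ)) ⟪magA a (x + t • ξ), ξ⟫ t :=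
    fun t ht => hasDerivAt_magPotential_comp hcont hsupp
      (by simpa using ((hasDerivAt_id t).smul_const ξ).const_add x) (hline t ht)
  have hlim : Tendsto (fun t => magPotential a (x + t • ξ)) atTop (𝓝 (magPotential a ξ)) :=
    (hcont.integral_hasStrictDerivAt 0 (colat ξ)).hasDerivAt.continuousAt.tendsto.comp
      (tendsto_colat_add_smul x hξ)
  have hint : IntegrableOn (fun t : ℝ => ⟪magA a (x + t • ξ), ξ⟫) (Set.Ici 0) :=
    integrableOn_Ici_deriv_of_eventually_nonneg_or_nonpos
      (fun t ht => (((continuousAt_magA hcont hsupp (hline t ht)).comp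
        (f := fun s : ℝ => x + s • ξ) (by fun_prop)).inner continuousAt_const).continuousWithinAt)
      hderiv (eventually_nonneg_or_nonpos_inner_magA_add_smul hpos x ξ) hlim
  refine ⟨hint, ?_⟩
  rw [integral_Ici_eq_integral_Ioi, integral_Ioi_of_hasDerivAt_of_tendsto' hderiv
    (hint.mono_set Set.Ioi_subset_Ici_self) hlim, ← intervalIntegral.integral_interval_sub_left
    (hcont.intervalIntegrable 0 _) (hcont.intervalIntegrable 0 _)]
  simp [magPotential]

/-- For `ξ ≠ 0` and `x` not on the incoming ray `{−tξ : t ≥ 0}`, the function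
`t ↦ ⟨A(x + tξ), ξ⟫` is integrable on `[0,∞)` and the outgoing phase
`Φ₊(x,ξ) = −∫₀^∞ ⟨A(x+tξ), ξ⟩ dt` equals `∫_{φ_ξ}^{φ_x} a(φ) dφ`. -/
theorem outgoing_phase_eq (a : ℝ → ℝ) (ha : ContDiff ℝ (⊤ : ℕ∞) a)
    (hpos : ∀ t, 0 ≤ a t) (hcs : HasCompactSupport a)
    (hsupp : tsupport a ⊆ Set.Ioo 0 Real.pi)
    (ξ x : E3) (hξ : ξ ≠ 0) (hx : ∀ t : ℝ, 0 ≤ t → x ≠ -(t • ξ)) :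
    IntegrableOn (fun t : ℝ => ⟪magA a (x + t • ξ), ξ⟫) (Set.Ici 0) ∧
    -(∫ t in Set.Ici (0:ℝ), ⟪magA a (x + t • ξ), ξ⟫) = ∫ φ in (colat ξ)..(colat x), a φ :=
  outgoing_phase_eq_general a ha hpos hsupp ξ x hξ hx
end
end

section
/- Fix c ∈ ℝ and define Ψ : ℝ³ → ℝ by Ψ(x) = ∫_c^{φ_x} a(t) dt. Then for every x ∈ ℝ³ with x ≠ 0, Ψ has gradient A(x) at x (in the sense of HasGradientAt). In particular the eikonal equation ⟨ξ, ∇Ψ(x) − A(x)⟩ = 0 holds for every ξ ∈ ℝ³ and every x ≠ 0. -/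
open Real MeasureTheory Filter
open scoped RealInnerProductSpace Topology

noncomputable section

/-!
Off the `x₃`-axis, `Ψ` is the primitive of `a` composed with the colatitude
`φ = arccos(⟪e₃, x⟫/|x|)`, so by the chain rule `∇Ψ(x) = a(φ_x) ∇φ(x)`, and differentiating
gives `∇φ(x) = e_{φ_x}/|x|`. On the axis `φ_x ∈ {0, π}` lies outside the support of `a`; since
`φ` is continuous there (though not differentiable), `Ψ` is constant near `x`, so
`∇Ψ(x) = 0 = A(x)`.
-/

section InnerProductSpace

variable {F : Type*} [NormedAddCommGroup F] [InnerProductSpace ℝ F] [CompleteSpace F]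
  {f g : F → ℝ} {f' g' x : F}

theorem HasGradientAt.mul (hf : HasGradientAt f f' x) (hg : HasGradientAt g g' x) :
    HasGradientAt (fun y => f y * g y) (f x • g' + g x • f') x := by
  rw [hasGradientAt_iff_hasFDerivAt, map_add, map_smul, map_smul]
  exact hf.hasFDerivAt.mul hg.hasFDerivAt

theorem HasDerivAt.comp_hasGradientAt {h : ℝ → ℝ} {h' : ℝ} (hh : HasDerivAt h h' (f x))
    (hf : HasGradientAt f f' x) : HasGradientAt (fun y => h (f y)) (h' • f') x := by
  rw [hasGradientAt_iff_hasFDerivAt, map_smul]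
  exact hh.comp_hasFDerivAt x hf.hasFDerivAt

theorem hasGradientAt_inner_right (e x : F) : HasGradientAt (fun y => ⟪e, y⟫) e x := by
  rw [hasGradientAt_iff_hasFDerivAt]
  exact (innerSL ℝ e).hasFDerivAt

theorem hasGradientAt_norm (hx : x ≠ 0) : HasGradientAt (‖·‖) (‖x‖⁻¹ • x) x := by
  have h := (hasStrictFDerivAt_norm_sq x).hasFDerivAt.sqrt (by positivity)
  simp only [Real.sqrt_sq (norm_nonneg _)] at h
  rw [hasGradientAt_iff_hasFDerivAt]
  refine h.congr_fderiv ?_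
  ext v
  simp only [one_div, mul_inv_rev, smul_apply, coe_innerSL_apply, nsmul_eq_mul, Nat.cast_ofNat,
    smul_eq_mul, map_smul, InnerProductSpace.toDual_apply_apply]
  field_simp

theorem hasGradientAt_inner_div_norm (e : F) (hx : x ≠ 0) :
    HasGradientAt (fun y => ⟪e, y⟫ / ‖y‖) (‖x‖⁻¹ • (e - (⟪e, x⟫ / ‖x‖ ^ 2) • x)) x := by
  have h := (hasGradientAt_inner_right e x).mul
    ((hasDerivAt_inv (norm_ne_zero_iff.mpr hx)).comp_hasGradientAt (hasGradientAt_norm hx))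
  convert h using 1
  · simp only [div_eq_mul_inv]
  · rw [smul_sub, smul_smul, smul_smul, smul_smul, sub_eq_add_neg, add_comm, ← neg_smul]
    congr 2
    field_simp

theorem hasGradientAt_arccos_inner_div_norm (e : F) (hx : ⟪e, x⟫ ^ 2 < ‖x‖ ^ 2) :
    HasGradientAt (fun y => arccos (⟪e, y⟫ / ‖y‖))
      (-(√(1 - (⟪e, x⟫ / ‖x‖) ^ 2))⁻¹ • ‖x‖⁻¹ • (e - (⟪e, x⟫ / ‖x‖ ^ 2) • x)) x := by
  have hx0 : x ≠ 0 := by rintro rfl; simp at hx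
  have hu : (⟪e, x⟫ / ‖x‖) ^ 2 < 1 := by
    rwa [div_pow, div_lt_one (by positivity)]
  obtain ⟨hlo, hhi⟩ := abs_lt.mp ((sq_lt_one_iff_abs_lt_one _).mp hu)
  have h := (hasDerivAt_arccos hlo.ne' hhi.ne).comp_hasGradientAt
    (f := fun y => ⟪e, y⟫ / ‖y‖) (hasGradientAt_inner_div_norm e hx0)
  simpa [neg_div, one_div] using h

end InnerProductSpace

theorem norm_sq_E3 (x : E3) : ‖x‖ ^ 2 = x 0 ^ 2 + x 1 ^ 2 + x 2 ^ 2 := by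
  simp [EuclideanSpace.real_norm_sq_eq, Fin.sum_univ_three]

theorem colat_eq_arccos_inner :
    colat = fun y => arccos (⟪EuclideanSpace.single 2 1, y⟫ / ‖y‖) := by
  ext y
  simp [colat, EuclideanSpace.inner_single_left]

theorem one_div_norm_smul_ephi {x : E3} (hρ : 0 < x 0 ^ 2 + x 1 ^ 2) :
    (1 / ‖x‖) • ephi x = -(√(1 - (x 2 / ‖x‖) ^ 2))⁻¹ • ‖x‖⁻¹ •
      (EuclideanSpace.single 2 1 - (x 2 / ‖x‖ ^ 2) • x) := by
  have hr : 0 < ‖x‖ := norm_pos_iff.mpr (by rintro rfl; simp at hρ)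
  have hs : 0 < √(x 0 ^ 2 + x 1 ^ 2) := Real.sqrt_pos.mpr hρ
  have hs2 := Real.sq_sqrt hρ.le
  have hr2 := norm_sq_E3 x
  have hsin : √(1 - (x 2 / ‖x‖) ^ 2) = √(x 0 ^ 2 + x 1 ^ 2) / ‖x‖ := by
    rw [← Real.sqrt_sq (by positivity : 0 ≤ √(x 0 ^ 2 + x 1 ^ 2) / ‖x‖)]
    congr 1
    field_simp
    linarith
  rw [hsin]
  ext i
  fin_cases i <;>
    simp only [ephi, one_div, inv_div, Fin.isValue, Fin.zero_eta, Fin.mk_one, Fin.reduceFinMk,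
      Fin.reduceEq, WithLp.equiv_symm_apply, PiLp.smul_apply, PiLp.neg_apply, PiLp.sub_apply,
      PiLp.single_eq_same, PiLp.single_eq_of_ne, ne_eq, not_false_eq_true, Matrix.cons_val,
      Matrix.cons_val_zero, Matrix.cons_val_one, smul_eq_mul, neg_smul, zero_sub, mul_neg,
      neg_neg, neg_inj] <;>
    field_simp
  linarith

theorem hasGradientAt_colat {x : E3} (hρ : 0 < x 0 ^ 2 + x 1 ^ 2) :
    HasGradientAt colat ((1 / ‖x‖) • ephi x) x := by
  have hin : ⟪EuclideanSpace.single 2 1, x⟫ = x 2 := by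
    simp [EuclideanSpace.inner_single_left]
  have h := hasGradientAt_arccos_inner_div_norm (EuclideanSpace.single 2 (1 : ℝ)) (x := x)
    (by rw [hin, norm_sq_E3]; linarith)
  rw [hin] at h
  rwa [one_div_norm_smul_ephi hρ, colat_eq_arccos_inner]

theorem colat_eq_zero_or_pi {x : E3} (hx : x ≠ 0) (hρ : ¬0 < x 0 ^ 2 + x 1 ^ 2) :
    colat x = 0 ∨ colat x = π := by
  have hr : 0 < ‖x‖ := norm_pos_iff.mpr hx
  have h : (x 2 / ‖x‖) ^ 2 = 1 := by
    rw [div_pow, div_eq_one_iff_eq (by positivity), norm_sq_E3]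
    nlinarith [sq_nonneg (x 0), sq_nonneg (x 1)]
  rcases sq_eq_one_iff.mp h with h | h
  · exact .inl (by rw [colat, h, arccos_one])
  · exact .inr (by rw [colat, h, arccos_neg_one])

theorem continuousAt_colat_s8 {x : E3} (hx : x ≠ 0) : ContinuousAt colat x :=
  continuous_arccos.continuousAt.comp (by fun_prop (disch := exact norm_ne_zero_iff.mpr hx))

theorem intervalIntegral.eventuallyEq_of_notMem_tsupport {a : ℝ → ℝ} (ha : LocallyIntegrable a)
    (c : ℝ) {t₀ : ℝ} (ht₀ : t₀ ∉ tsupport a) :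
    (fun t => ∫ s in c..t, a s) =ᶠ[𝓝 t₀] fun _ => ∫ s in c..t₀, a s := by
  obtain ⟨ε, hε, hzero⟩ :=
    Metric.eventually_nhds_iff_ball.mp (notMem_tsupport_iff_eventuallyEq.mp ht₀)
  have hint (s t : ℝ) : IntervalIntegrable a volume s t := intervalIntegrable_iff.mpr
    ((ha.integrableOn_isCompact isCompact_uIcc).mono_set Set.uIoc_subset_uIcc)
  filter_upwards [Metric.ball_mem_nhds t₀ hε] with t ht
  have hsub : Set.uIcc t₀ t ⊆ Metric.ball t₀ ε :=
    (convex_ball t₀ ε).ordConnected.uIcc_subset (Metric.mem_ball_self hε) ht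
  rw [← intervalIntegral.integral_add_adjacent_intervals (b := t₀) (hint _ _) (hint _ _),
    intervalIntegral.integral_congr (g := 0) fun s hs => hzero s (hsub hs)]
  simp

theorem magA_of_pos (a : ℝ → ℝ) {x : E3} (hρ : 0 < x 0 ^ 2 + x 1 ^ 2) :
    magA a x = a (colat x) • ((1 / ‖x‖) • ephi x) := by
  rw [magA, if_pos hρ, smul_smul, div_eq_mul_one_div]

theorem hasGradientAt_integral_colat {a : ℝ → ℝ} (ha : Continuous a)
    (hsupp : tsupport a ⊆ Set.Ioo 0 π) (c : ℝ) {x : E3} (hx : x ≠ 0) :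
    HasGradientAt (fun y => ∫ t in c..colat y, a t) (magA a x) x := by
  by_cases hρ : 0 < x 0 ^ 2 + x 1 ^ 2
  · rw [magA_of_pos a hρ]
    exact (ha.integral_hasStrictDerivAt c _).hasDerivAt.comp_hasGradientAt
      (hasGradientAt_colat hρ)
  · have hcolat : colat x ∉ tsupport a := fun hmem => by
      rcases colat_eq_zero_or_pi hx hρ with h | h <;> rw [h] at hmem <;> simpa using hsupp hmem
    rw [magA, if_neg hρ]
    exact (hasGradientAt_const x _).congr_of_eventuallyEq <| (continuousAt_colat_s8 hx).eventually <|
      intervalIntegral.eventuallyEq_of_notMem_tsupport ha.locallyIntegrable c hcolat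

theorem gradient_phase_eq_A_general (a : ℝ → ℝ) (ha : ContDiff ℝ (⊤ : ℕ∞) a)
    (hsupp : tsupport a ⊆ Set.Ioo 0 Real.pi) (c : ℝ) :
    (∀ x : E3, x ≠ 0 →
        HasGradientAt (fun y : E3 => ∫ t in c..(colat y), a t) (magA a x) x) ∧
    (∀ (ξ x : E3), x ≠ 0 →
        ⟪ξ, gradient (fun y : E3 => ∫ t in c..(colat y), a t) x - magA a x⟫ = 0) := by
  have hΨ (x : E3) (hx : x ≠ 0) := hasGradientAt_integral_colat ha.continuous hsupp c hx
  refine ⟨hΨ, fun ξ x hx => ?_⟩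
  rw [(hΨ x hx).gradient, sub_self, inner_zero_right]

/-- For `Ψ(x) = ∫_c^{φ_x} a(t) dt`, at every `x ≠ 0` the function `Ψ` has
gradient `A(x)`; in particular the eikonal equation `⟨ξ, ∇Ψ(x) − A(x)⟩ = 0` holds for every
`ξ ∈ ℝ³` and every `x ≠ 0`. -/
theorem gradient_phase_eq_A (a : ℝ → ℝ) (ha : ContDiff ℝ (⊤ : ℕ∞) a)
    (hpos : ∀ t, 0 ≤ a t) (hcs : HasCompactSupport a)
    (hsupp : tsupport a ⊆ Set.Ioo 0 Real.pi) (c : ℝ) :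
    (∀ x : E3, x ≠ 0 →
        HasGradientAt (fun y : E3 => ∫ t in c..(colat y), a t) (magA a x) x) ∧
    (∀ (ξ x : E3), x ≠ 0 →
        ⟪ξ, gradient (fun y : E3 => ∫ t in c..(colat y), a t) x - magA a x⟫ = 0) :=
  gradient_phase_eq_A_general a ha hsupp c
end
end
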